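/- Let A ∈ ℝ^{n×n}, B ∈ ℝ^{n×m} with (A,B) regularizable and Ã B̃ = 0, where Ã = Π_{R(B)⊥} A and B̃ = Π_{R(B)} A. Let x_0 ∈ ℝⁿ, let (x_t) be the DGR closed-loop trajectory with α = 0, let z̄_0 = x_0/‖x_0‖ (and z̄_0 = 0 if x_0 = 0), and set a_s = ‖Ã^s A z̄_0‖. Then for every t with 1 ≤ t + 1 ≤ n, ‖x_{t+1}‖ ≤ ( M_{t+1}(A) + a_t + Σ_{r=1}^{t−1} M_r(A) a_{t−r} ) ‖x_0‖. -/

import Mathlib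

/-!
Write `Ã = (1 - Π_B) A` and `B̃ = Π_B A`, so that `A = Ã + B̃`, and let `q_t = (1 - Π_{V_t}) x_t`
be the Gram–Schmidt residuals of the trajectory; they are pairwise orthogonal. The dynamics read
`x_{t+1} = Ã x_t + B̃ q_t`, and since `Ã B̃ = 0` this unrolls to `x_{t+1} = Ã^{t+1} x_0 + B̃ q_t`,
where `Ã^{t+1} x_0 = Ã^t A x_0` once `t ≥ 1`. With the gains `g_t = ‖A q_t‖ / ‖q_t‖` and
`‖q_t‖ ≤ ‖x_t‖` this gives the linear recursion `‖x_{t+2}‖ ≤ a_{t+1} ‖x_0‖ + g_{t+1} ‖x_{t+1}‖`,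
started from `‖x_1‖ = g_0 ‖x_0‖`. Unrolling it bounds `‖x_{t+1}‖` by products of consecutive
gains times `a_s ‖x_0‖`, and a product of the gains of `k` orthogonal vectors is at most `M_k(A)`,
as one sees by normalising them to an orthonormal family.
-/

open Matrix

noncomputable section

/-- The Euclidean norm on `Fin n → ℝ`. -/
def eucNorm {n : ℕ} (x : Fin n → ℝ) : ℝ := Real.sqrt (∑ i, (x i) ^ 2)

/-- `P` is the matrix of the orthogonal projection of `ℝⁿ` onto the subspace `V`:
the unique symmetric idempotent matrix whose range is `V`. -/
def IsProjMatrix {n : ℕ} (P : Matrix (Fin n) (Fin n) ℝ) (V : Submodule ℝ (Fin n → ℝ)) : Prop :=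
  P.IsSymm ∧ P * P = P ∧ LinearMap.range P.mulVecLin = V

/-- A real square matrix is Schur stable if every complex eigenvalue has modulus `< 1`,
i.e. its spectral radius is `< 1`. -/
def SchurStable {n : ℕ} (M : Matrix (Fin n) (Fin n) ℝ) : Prop :=
  ∀ (μ : ℂ) (v : Fin n → ℂ), v ≠ 0 →
    (M.map (algebraMap ℝ ℂ)).mulVec v = μ • v → ‖μ‖ < 1

/-- The operator norm of a matrix induced by the Euclidean vector norm:
`‖M‖ = sup {‖M u‖ : ‖u‖ = 1}`. -/
def l2OpNorm {n m : ℕ} (M : Matrix (Fin n) (Fin m) ℝ) : ℝ :=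
  sSup {c | ∃ x : Fin m → ℝ, eucNorm x = 1 ∧ c = eucNorm (M.mulVec x)}

/-- The instability number of order `t` of `A`:
`M_t(A) = sup { ∏ i ‖A v i‖ : (v 1, …, v t) orthonormal in ℝⁿ }`. -/
def instabilityNumber {n : ℕ} (A : Matrix (Fin n) (Fin n) ℝ) (t : ℕ) : ℝ :=
  sSup {c | ∃ v : Fin t → (Fin n → ℝ),
    (∀ i j, v i ⬝ᵥ v j = if i = j then 1 else 0) ∧ c = ∏ i, eucNorm (A.mulVec (v i))}

section EuclideanNorm

variable {n : ℕ}

theorem eucNorm_eq_norm_toLp (v : Fin n → ℝ) : eucNorm v = ‖WithLp.toLp 2 v‖ := by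
  simp [eucNorm, EuclideanSpace.norm_eq, Real.norm_eq_abs, sq_abs]

theorem dotProduct_eq_inner_toLp (v w : Fin n → ℝ) :
    v ⬝ᵥ w = inner ℝ (WithLp.toLp 2 v) (WithLp.toLp 2 w) := by
  simp [dotProduct, PiLp.inner_apply, mul_comm]

theorem eucNorm_nonneg (v : Fin n → ℝ) : 0 ≤ eucNorm v := Real.sqrt_nonneg _

@[simp]
theorem eucNorm_eq_zero {v : Fin n → ℝ} : eucNorm v = 0 ↔ v = 0 := by
  simp [eucNorm_eq_norm_toLp]

@[simp]
theorem eucNorm_zero : eucNorm (0 : Fin n → ℝ) = 0 := eucNorm_eq_zero.2 rfl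

theorem eucNorm_add_le (v w : Fin n → ℝ) : eucNorm (v + w) ≤ eucNorm v + eucNorm w := by
  simpa only [eucNorm_eq_norm_toLp, WithLp.toLp_add] using norm_add_le _ _

theorem eucNorm_smul (c : ℝ) (v : Fin n → ℝ) : eucNorm (c • v) = |c| * eucNorm v := by
  simp only [eucNorm_eq_norm_toLp, WithLp.toLp_smul, norm_smul, Real.norm_eq_abs]

theorem dotProduct_self_eq_eucNorm_sq (v : Fin n → ℝ) : v ⬝ᵥ v = eucNorm v ^ 2 := by
  rw [dotProduct_eq_inner_toLp, eucNorm_eq_norm_toLp, real_inner_self_eq_norm_sq]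

theorem eucNorm_sq_add_of_dotProduct_eq_zero {v w : Fin n → ℝ} (h : v ⬝ᵥ w = 0) :
    eucNorm (v + w) ^ 2 = eucNorm v ^ 2 + eucNorm w ^ 2 := by
  rw [dotProduct_eq_inner_toLp] at h
  simp only [eucNorm_eq_norm_toLp, WithLp.toLp_add, norm_add_sq_real, h]
  ring

end EuclideanNorm

namespace Matrix

variable {n : ℕ} {P : Matrix (Fin n) (Fin n) ℝ}

theorem IsSymm.one_sub_mulVec_dotProduct_mulVec (hs : P.IsSymm) (hi : P * P = P)
    (v w : Fin n → ℝ) : ((1 - P) *ᵥ v) ⬝ᵥ (P *ᵥ w) = 0 := by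
  have h : (1 - P)ᵀ * P = 0 := by
    rw [transpose_sub, transpose_one, hs.eq, sub_mul, one_mul, hi, sub_self]
  rw [dotProduct_mulVec, vecMul_mulVec, h, vecMul_zero, zero_dotProduct]

theorem IsSymm.eucNorm_sq_eq_add (hs : P.IsSymm) (hi : P * P = P) (v : Fin n → ℝ) :
    eucNorm v ^ 2 = eucNorm (P *ᵥ v) ^ 2 + eucNorm ((1 - P) *ᵥ v) ^ 2 := by
  rw [← eucNorm_sq_add_of_dotProduct_eq_zero, sub_mulVec, one_mulVec, add_sub_cancel]
  rw [dotProduct_comm]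
  exact hs.one_sub_mulVec_dotProduct_mulVec hi v v

theorem IsSymm.eucNorm_mulVec_le (hs : P.IsSymm) (hi : P * P = P) (v : Fin n → ℝ) :
    eucNorm (P *ᵥ v) ≤ eucNorm v := by
  have := hs.eucNorm_sq_eq_add hi v
  exact (sq_le_sq₀ (eucNorm_nonneg _) (eucNorm_nonneg _)).1 (by nlinarith)

theorem IsSymm.eucNorm_one_sub_mulVec_le (hs : P.IsSymm) (hi : P * P = P) (v : Fin n → ℝ) :
    eucNorm ((1 - P) *ᵥ v) ≤ eucNorm v := by
  have := hs.eucNorm_sq_eq_add hi v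
  exact (sq_le_sq₀ (eucNorm_nonneg _) (eucNorm_nonneg _)).1 (by nlinarith)

end Matrix

namespace IsProjMatrix

variable {n : ℕ} {P : Matrix (Fin n) (Fin n) ℝ} {V : Submodule ℝ (Fin n → ℝ)}

theorem mulVec_mem (hP : IsProjMatrix P V) (v : Fin n → ℝ) : P *ᵥ v ∈ V :=
  hP.2.2 ▸ ⟨v, rfl⟩

theorem one_sub_mulVec_dotProduct_eq_zero (hP : IsProjMatrix P V) (v : Fin n → ℝ)
    {w : Fin n → ℝ} (hw : w ∈ V) : ((1 - P) *ᵥ v) ⬝ᵥ w = 0 := by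
  rw [← hP.2.2] at hw
  obtain ⟨y, rfl⟩ := hw
  exact hP.1.one_sub_mulVec_dotProduct_mulVec hP.2.1 v y

theorem mulVec_eq_zero (hP : IsProjMatrix P ⊥) (v : Fin n → ℝ) : P *ᵥ v = 0 :=
  (Submodule.mem_bot ℝ).1 (hP.mulVec_mem v)

end IsProjMatrix

section Instability

open Finset

variable {n : ℕ} (A : Matrix (Fin n) (Fin n) ℝ)

/-- It is `0` at `v = 0`, so a vanishing vector makes any product of gains vanish. -/
def gain (v : Fin n → ℝ) : ℝ := eucNorm (A *ᵥ v) / eucNorm v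

theorem gain_nonneg (v : Fin n → ℝ) : 0 ≤ gain A v :=
  div_nonneg (eucNorm_nonneg _) (eucNorm_nonneg _)

theorem eucNorm_mulVec_eq_gain_mul (v : Fin n → ℝ) : eucNorm (A *ᵥ v) = gain A v * eucNorm v := by
  rcases eq_or_ne v 0 with rfl | hv
  · simp
  · rw [gain, div_mul_cancel₀ _ (eucNorm_eq_zero.not.2 hv)]

theorem gain_smul {c : ℝ} (hc : c ≠ 0) (v : Fin n → ℝ) : gain A (c • v) = gain A v := by
  simp only [gain, mulVec_smul, eucNorm_smul]
  exact mul_div_mul_left _ _ (abs_ne_zero.2 hc)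

theorem eucNorm_mulVec_le_opNorm_mul (v : Fin n → ℝ) :
    eucNorm (A *ᵥ v) ≤ ‖toEuclideanCLM (𝕜 := ℝ) A‖ * eucNorm v := by
  simpa only [eucNorm_eq_norm_toLp, toEuclideanCLM_toLp] using
    (toEuclideanCLM (𝕜 := ℝ) A).le_opNorm (WithLp.toLp 2 v)

theorem instabilityNumber_bddAbove (t : ℕ) :
    BddAbove {c | ∃ v : Fin t → (Fin n → ℝ),
      (∀ i j, v i ⬝ᵥ v j = if i = j then 1 else 0) ∧ c = ∏ i, eucNorm (A *ᵥ v i)} := by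
  refine ⟨‖toEuclideanCLM (𝕜 := ℝ) A‖ ^ t, ?_⟩
  rintro c ⟨v, hv, rfl⟩
  have hunit : ∀ i, eucNorm (v i) = 1 := fun i => by
    have h := dotProduct_self_eq_eucNorm_sq (v i)
    rw [hv, if_pos rfl] at h
    nlinarith [eucNorm_nonneg (v i)]
  calc ∏ i, eucNorm (A *ᵥ v i) ≤ ∏ _i : Fin t, ‖toEuclideanCLM (𝕜 := ℝ) A‖ :=
        prod_le_prod (fun i _ => eucNorm_nonneg _) fun i _ => by
          simpa [hunit] using eucNorm_mulVec_le_opNorm_mul A (v i)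
    _ = _ := by simp

theorem instabilityNumber_nonneg (t : ℕ) : 0 ≤ instabilityNumber A t := by
  apply Real.sSup_nonneg
  rintro c ⟨v, -, rfl⟩
  exact prod_nonneg fun i _ => eucNorm_nonneg _

theorem instabilityNumber_zero : instabilityNumber A 0 = 1 := by
  simp [instabilityNumber]

theorem prod_gain_le_instabilityNumber {k : ℕ} (q : Fin k → Fin n → ℝ)
    (hq : Pairwise fun i j => q i ⬝ᵥ q j = 0) : ∏ i, gain A (q i) ≤ instabilityNumber A k := by
  by_cases h0 : ∃ i, q i = 0
  · obtain ⟨i, hi⟩ := h0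
    rw [prod_eq_zero (mem_univ i) (by simp [gain, hi])]
    exact instabilityNumber_nonneg A k
  push Not at h0
  have hne : ∀ i, eucNorm (q i) ≠ 0 := fun i => eucNorm_eq_zero.not.2 (h0 i)
  set v := fun i => (eucNorm (q i))⁻¹ • q i
  have hv : ∀ i j, v i ⬝ᵥ v j = if i = j then 1 else 0 := by
    intro i j
    split_ifs with hij
    · subst hij
      simp only [v, smul_dotProduct, dotProduct_smul, smul_eq_mul, dotProduct_self_eq_eucNorm_sq]
      field_simp [hne i]
    · simp [v, hq hij]
  have hgain : ∀ i, gain A (q i) = eucNorm (A *ᵥ v i) := fun i => by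
    rw [← gain_smul A (inv_ne_zero (hne i)), gain, eucNorm_smul, abs_inv,
      abs_of_nonneg (eucNorm_nonneg _), inv_mul_cancel₀ (hne i), div_one]
  rw [prod_congr rfl fun i _ => hgain i]
  exact le_csSup (instabilityNumber_bddAbove A k) ⟨v, hv, rfl⟩

theorem prod_Ico_gain_le_instabilityNumber (q : ℕ → Fin n → ℝ)
    (hq : Pairwise fun i j => q i ⬝ᵥ q j = 0) (s T : ℕ) :
    ∏ i ∈ Ico s T, gain A (q i) ≤ instabilityNumber A (T - s) := by
  rw [prod_Ico_eq_prod_range, ← Fin.prod_univ_eq_prod_range (fun i => gain A (q (s + i)))]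
  exact prod_gain_le_instabilityNumber A _ <|
    hq.comp_of_injective ((add_right_injective s).comp Fin.val_injective)

end Instability

section Recurrence

open Finset

theorem le_prod_mul_add_sum_of_le_add_mul {u c f : ℕ → ℝ} (hc : ∀ t, 0 ≤ c t)
    (h : ∀ t, u (t + 1) ≤ f t + c t * u t) (T : ℕ) :
    u T ≤ (∏ i ∈ range T, c i) * u 0 + ∑ s ∈ range T, (∏ i ∈ Ico (s + 1) T, c i) * f s := by
  induction T with
  | zero => simp
  | succ T ih =>
    have hprod : ∀ s ∈ range T,
        c T * ((∏ i ∈ Ico (s + 1) T, c i) * f s) = (∏ i ∈ Ico (s + 1) (T + 1), c i) * f s :=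
      fun s hs => by rw [prod_Ico_succ_top (by simpa using hs)]; ring
    calc u (T + 1) ≤ f T + c T * u T := h T
      _ ≤ f T + c T * ((∏ i ∈ range T, c i) * u 0
            + ∑ s ∈ range T, (∏ i ∈ Ico (s + 1) T, c i) * f s) := by gcongr; exact hc T
      _ = _ := by
        rw [mul_add, mul_sum, sum_congr rfl hprod, prod_range_succ, sum_range_succ, Ico_self,
          prod_empty]
        ring

theorem sum_range_mul_le_add_sum_Icc {m a : ℕ → ℝ} (hm : m 0 = 1) (ha : 0 ≤ a 0) (t : ℕ) :
    ∑ s ∈ range t, m (t - (s + 1)) * a (s + 1)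
      ≤ a t + ∑ r ∈ Icc 1 (t - 1), m r * a (t - r) := by
  rcases t with _ | k
  · simpa using ha
  · have hreflect : ∑ s ∈ range k, m (k - s) * a (s + 1) = ∑ r ∈ Icc 1 k, m r * a (k + 1 - r) :=
      sum_nbij' (fun s => k - s) (fun r => k - r) (by simp; omega) (by simp; omega)
        (by simp; omega) (by simp; omega) fun s hs => by
          simp only [mem_range] at hs
          rw [show k + 1 - (k - s) = s + 1 by omega]
    rw [sum_range_succ, Nat.sub_self, hm, one_mul, Nat.add_sub_cancel]
    simp only [Nat.add_sub_add_right]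
    rw [hreflect, add_comm]

end Recurrence

namespace Matrix

variable {n : ℕ}

theorem eucNorm_mulVec_eq_eucNorm_mulVec_normalize_mul (M : Matrix (Fin n) (Fin n) ℝ)
    (v : Fin n → ℝ) :
    eucNorm (M *ᵥ v) = eucNorm (M *ᵥ if v = 0 then 0 else (eucNorm v)⁻¹ • v) * eucNorm v := by
  split_ifs with hv
  · simp [hv]
  · rw [mulVec_smul, eucNorm_smul, abs_inv, abs_of_nonneg (eucNorm_nonneg v)]
    field_simp [eucNorm_eq_zero.not.2 hv]

end Matrix

section Trajectory

variable {n : ℕ} {A PB : Matrix (Fin n) (Fin n) ℝ} {x : ℕ → Fin n → ℝ}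
  {Pv : ℕ → Matrix (Fin n) (Fin n) ℝ}

theorem dgr_residual_pairwise_orthogonal
    (hPv : ∀ t, IsProjMatrix (Pv t) (Submodule.span ℝ (Set.range fun i : Fin t => x i.val))) :
    Pairwise fun i j => ((1 - Pv i) *ᵥ x i) ⬝ᵥ ((1 - Pv j) *ᵥ x j) = 0 := by
  have hlt : ∀ i j, i < j → ((1 - Pv j) *ᵥ x j) ⬝ᵥ ((1 - Pv i) *ᵥ x i) = 0 := by
    intro i j hij
    have hmono : Submodule.span ℝ (Set.range fun k : Fin i => x k.val)
        ≤ Submodule.span ℝ (Set.range fun k : Fin j => x k.val) :=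
      Submodule.span_mono <| Set.range_subset_iff.2 fun k => ⟨⟨k, k.2.trans hij⟩, rfl⟩
    refine (hPv j).one_sub_mulVec_dotProduct_eq_zero _ ?_
    rw [sub_mulVec, one_mulVec]
    exact Submodule.sub_mem _ (Submodule.subset_span ⟨⟨i, hij⟩, rfl⟩)
      (hmono ((hPv i).mulVec_mem (x i)))
  intro i j hij
  rcases hij.lt_or_gt with h | h
  · rw [dotProduct_comm]
    exact hlt i j h
  · exact hlt j i h

theorem dgr_succ_eq_add (hdyn : ∀ t, x (t + 1) = A *ᵥ x t - (PB * A) *ᵥ (Pv t *ᵥ x t)) (t : ℕ) :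
    x (t + 1) = ((1 - PB) * A) *ᵥ x t + (PB * A) *ᵥ ((1 - Pv t) *ᵥ x t) := by
  rw [hdyn, mulVec_mulVec, mulVec_mulVec, ← sub_mulVec, ← add_mulVec]
  congr 1
  noncomm_ring

theorem dgr_succ_eq (hdyn : ∀ t, x (t + 1) = A *ᵥ x t - (PB * A) *ᵥ (Pv t *ᵥ x t))
    (hAB : ((1 - PB) * A) * (PB * A) = 0) (t : ℕ) :
    x (t + 1) = ((1 - PB) * A) ^ (t + 1) *ᵥ x 0 + (PB * A) *ᵥ ((1 - Pv t) *ᵥ x t) := by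
  induction t with
  | zero => rw [dgr_succ_eq_add hdyn, pow_one]
  | succ t ih =>
    rw [dgr_succ_eq_add hdyn (t + 1), ih, mulVec_add, mulVec_mulVec, mulVec_mulVec, hAB,
      zero_mulVec, add_zero, ← pow_succ']

theorem dgr_eucNorm_add_two_le {W : Submodule ℝ (Fin n → ℝ)} {V : ℕ → Submodule ℝ (Fin n → ℝ)}
    (hPB : IsProjMatrix PB W) (hPv : ∀ t, IsProjMatrix (Pv t) (V t))
    (hdyn : ∀ t, x (t + 1) = A *ᵥ x t - (PB * A) *ᵥ (Pv t *ᵥ x t))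
    (hAB : ((1 - PB) * A) * (PB * A) = 0) (t : ℕ) :
    eucNorm (x (t + 2)) ≤ eucNorm ((((1 - PB) * A) ^ (t + 1) * A) *ᵥ x 0)
      + gain A ((1 - Pv (t + 1)) *ᵥ x (t + 1)) * eucNorm (x (t + 1)) := by
  have hB : ((1 - PB) * A) ^ (t + 1) * (PB * A) = 0 := by rw [pow_succ, mul_assoc, hAB, mul_zero]
  have hpow : ((1 - PB) * A) ^ (t + 2) = ((1 - PB) * A) ^ (t + 1) * A := by
    calc ((1 - PB) * A) ^ (t + 2)
        = ((1 - PB) * A) ^ (t + 1) * ((1 - PB) * A) + ((1 - PB) * A) ^ (t + 1) * (PB * A) := by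
          rw [hB, add_zero, pow_succ]
      _ = ((1 - PB) * A) ^ (t + 1) * A := by
          rw [← mul_add]
          congr 1
          noncomm_ring
  set q := (1 - Pv (t + 1)) *ᵥ x (t + 1)
  calc eucNorm (x (t + 2))
      ≤ eucNorm ((((1 - PB) * A) ^ (t + 1) * A) *ᵥ x 0) + eucNorm (PB *ᵥ (A *ᵥ q)) := by
        rw [dgr_succ_eq hdyn hAB (t + 1), hpow, ← mulVec_mulVec _ PB A]
        exact eucNorm_add_le _ _
    _ ≤ eucNorm ((((1 - PB) * A) ^ (t + 1) * A) *ᵥ x 0) + gain A q * eucNorm (x (t + 1)) := by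
        gcongr
        calc eucNorm (PB *ᵥ (A *ᵥ q)) ≤ eucNorm (A *ᵥ q) := hPB.1.eucNorm_mulVec_le hPB.2.1 _
          _ = gain A q * eucNorm q := eucNorm_mulVec_eq_gain_mul A q
          _ ≤ gain A q * eucNorm (x (t + 1)) := by
              gcongr
              · exact gain_nonneg A q
              · exact (hPv (t + 1)).1.eucNorm_one_sub_mulVec_le (hPv (t + 1)).2.1 _

theorem dgr_eucNorm_succ_le {W : Submodule ℝ (Fin n → ℝ)} (hPB : IsProjMatrix PB W)
    (hPv : ∀ t, IsProjMatrix (Pv t) (Submodule.span ℝ (Set.range fun i : Fin t => x i.val)))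
    (hdyn : ∀ t, x (t + 1) = A *ᵥ x t - (PB * A) *ᵥ (Pv t *ᵥ x t))
    (hAB : ((1 - PB) * A) * (PB * A) = 0) (t : ℕ) :
    eucNorm (x (t + 1)) ≤ instabilityNumber A (t + 1) * eucNorm (x 0)
      + ∑ s ∈ Finset.range t, instabilityNumber A (t - (s + 1))
          * eucNorm ((((1 - PB) * A) ^ (s + 1) * A) *ᵥ x 0) := by
  set q := fun i => (1 - Pv i) *ᵥ x i
  have hq : Pairwise fun i j => q i ⬝ᵥ q j = 0 := dgr_residual_pairwise_orthogonal hPv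
  have hP0 : ∀ v, Pv 0 *ᵥ v = 0 := (by simpa using hPv 0 : IsProjMatrix (Pv 0) ⊥).mulVec_eq_zero
  have hx1 : eucNorm (x 1) = gain A (q 0) * eucNorm (x 0) := by
    have hq0 : q 0 = x 0 := by simp [q, sub_mulVec, hP0]
    rw [hq0, ← eucNorm_mulVec_eq_gain_mul, hdyn 0, hP0, mulVec_zero, sub_zero]
  calc eucNorm (x (t + 1))
      ≤ _ := le_prod_mul_add_sum_of_le_add_mul (u := fun k => eucNorm (x (k + 1)))
        (fun _ => gain_nonneg A _) (dgr_eucNorm_add_two_le hPB hPv hdyn hAB) t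
    _ ≤ _ := by
      rw [hx1, ← mul_assoc, ← Finset.prod_range_succ' (fun i => gain A (q i))]
      gcongr with s hs
      · exact eucNorm_nonneg _
      · simpa using prod_Ico_gain_le_instabilityNumber A q hq 0 (t + 1)
      · exact eucNorm_nonneg _
      · exact prod_Ico_gain_le_instabilityNumber A (fun i => q (i + 1))
          (hq.comp_of_injective (add_left_injective 1)) (s + 1) t

end Trajectory

theorem stmt11_general {n m : ℕ} (A : Matrix (Fin n) (Fin n) ℝ) (B : Matrix (Fin n) (Fin m) ℝ)
    (PB : Matrix (Fin n) (Fin n) ℝ)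
    (hPB : IsProjMatrix PB (LinearMap.range B.mulVecLin))
    (hAB : ((1 - PB) * A) * (PB * A) = 0)
    (x : ℕ → Fin n → ℝ)
    (Pv : ℕ → Matrix (Fin n) (Fin n) ℝ)
    (hPv : ∀ t, IsProjMatrix (Pv t)
      (Submodule.span ℝ (Set.range fun i : Fin t => x i.val)))
    (hdyn : ∀ t, x (t + 1) = A.mulVec (x t) - (PB * A).mulVec ((Pv t).mulVec (x t)))
    (zbar0 : Fin n → ℝ)
    (hzbar0 : zbar0 = if x 0 = 0 then 0 else (eucNorm (x 0))⁻¹ • x 0)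
    (a : ℕ → ℝ)
    (ha : ∀ s, a s = eucNorm ((((1 - PB) * A) ^ s * A).mulVec zbar0)) :
    ∀ t, t + 1 ≤ n →
      eucNorm (x (t + 1)) ≤
        (instabilityNumber A (t + 1) + a t
          + ∑ r ∈ Finset.Icc 1 (t - 1), instabilityNumber A r * a (t - r))
          * eucNorm (x 0) := by
  intro t _
  have hfree : ∀ s, eucNorm ((((1 - PB) * A) ^ s * A) *ᵥ x 0) = a s * eucNorm (x 0) := by
    intro s
    rw [ha, hzbar0, ← eucNorm_mulVec_eq_eucNorm_mulVec_normalize_mul]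
  have ha0 : ∀ s, 0 ≤ a s := fun s => ha s ▸ eucNorm_nonneg _
  calc eucNorm (x (t + 1))
      ≤ instabilityNumber A (t + 1) * eucNorm (x 0)
        + ∑ s ∈ Finset.range t, instabilityNumber A (t - (s + 1)) * (a (s + 1) * eucNorm (x 0)) := by
        simpa only [hfree] using dgr_eucNorm_succ_le hPB hPv hdyn hAB t
    _ = (instabilityNumber A (t + 1)
        + ∑ s ∈ Finset.range t, instabilityNumber A (t - (s + 1)) * a (s + 1)) * eucNorm (x 0) := by
        simp only [← mul_assoc, ← Finset.sum_mul, ← add_mul]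
    _ ≤ _ := by
        rw [add_assoc]
        gcongr
        · exact eucNorm_nonneg _
        · exact sum_range_mul_le_add_sum_Icc (instabilityNumber_zero A) (ha0 0) t

/-- Bound on the DGR trajectory via instability numbers, for regularizable `(A,B)`
with `Ã B̃ = 0`. -/
theorem stmt11 {n m : ℕ} (A : Matrix (Fin n) (Fin n) ℝ) (B : Matrix (Fin n) (Fin m) ℝ)
    (PB : Matrix (Fin n) (Fin n) ℝ)
    (hPB : IsProjMatrix PB (LinearMap.range B.mulVecLin))
    (hreg : SchurStable ((1 - PB) * A))
    (hAB : ((1 - PB) * A) * (PB * A) = 0)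
    (x : ℕ → Fin n → ℝ)
    (Pv : ℕ → Matrix (Fin n) (Fin n) ℝ)
    (hPv : ∀ t, IsProjMatrix (Pv t)
      (Submodule.span ℝ (Set.range fun i : Fin t => x i.val)))
    (hdyn : ∀ t, x (t + 1) = A.mulVec (x t) - (PB * A).mulVec ((Pv t).mulVec (x t)))
    (zbar0 : Fin n → ℝ)
    (hzbar0 : zbar0 = if x 0 = 0 then 0 else (eucNorm (x 0))⁻¹ • x 0)
    (a : ℕ → ℝ)
    (ha : ∀ s, a s = eucNorm ((((1 - PB) * A) ^ s * A).mulVec zbar0)) :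
    ∀ t, t + 1 ≤ n →
      eucNorm (x (t + 1)) ≤
        (instabilityNumber A (t + 1) + a t
          + ∑ r ∈ Finset.Icc 1 (t - 1), instabilityNumber A r * a (t - r))
          * eucNorm (x 0) :=
  stmt11_general A B PB hPB hAB x Pv hPv hdyn zbar0 hzbar0 a ha
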